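/- Let G be the incidence graph of a projective plane of order q = r−1 (so G is r-regular bipartite on 2(r²−r+1) vertices with diameter 3). Then the semi-double graph G^{2V2} is a bipartite biregular graph with degrees r and 2r, order 3r² − 3r + 3, and diameter 3. -/

import Mathlib

/-- The semi-double of the bipartite graph determined by `R : A → B → Prop`, where each
vertex of the part `B` is duplicated (both copies keep the same neighborhood). -/
def bipSemiDoubleB {A B : Type*} (R : A → B → Prop) : SimpleGraph (A ⊕ (B ⊕ B)) where
  Adj x y :=
    match x, y with
    | Sum.inl a, Sum.inr (Sum.inl b) => R a b
    | Sum.inl a, Sum.inr (Sum.inr b) => R a b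
    | Sum.inr (Sum.inl b), Sum.inl a => R a b
    | Sum.inr (Sum.inr b), Sum.inl a => R a b
    | _, _ => False
  symm := by constructor; rintro (a | b | b) (a' | b' | b') h <;> simp_all
  loopless := by constructor; rintro (a | b | b) h <;> simp_all

/-!
Both copies of a line have the neighborhood of the line, which gives the degrees. Any two points
are collinear and any two lines (or copies of lines) concurrent, so pairs within a part are at
distance at most `2`, and a point and a line at distance at most `2 + 1`. The graph stays
bipartite, so a point off a line is at odd distance greater than `1` from it.
-/

open Configuration SimpleGraph Set

namespace bipSemiDoubleB

variable {A B : Type*} {R : A → B → Prop}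

@[simp]
lemma adj_inl_inr {a : A} {c : B ⊕ B} :
    (bipSemiDoubleB R).Adj (.inl a) (.inr c) ↔ R a (c.elim id id) := by
  rcases c with b | b <;> rfl

@[simp]
lemma adj_inr_inl {a : A} {c : B ⊕ B} :
    (bipSemiDoubleB R).Adj (.inr c) (.inl a) ↔ R a (c.elim id id) :=
  (bipSemiDoubleB R).adj_comm _ _ |>.trans adj_inl_inr

@[simp]
lemma not_adj_inl_inl {a a' : A} : ¬ (bipSemiDoubleB R).Adj (.inl a) (.inl a') := id

@[simp]
lemma not_adj_inr_inr {c c' : B ⊕ B} : ¬ (bipSemiDoubleB R).Adj (.inr c) (.inr c') := by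
  rcases c with b | b <;> rcases c' with b' | b' <;> exact id

lemma ncard_neighborSet_inr (c : B ⊕ B) :
    ((bipSemiDoubleB R).neighborSet (.inr c)).ncard = {a | R a (c.elim id id)}.ncard := by
  have : (bipSemiDoubleB R).neighborSet (.inr c) = .inl '' {a | R a (c.elim id id)} := by
    ext (a | c') <;> simp
  rw [this, ncard_image_of_injective _ Sum.inl_injective]

lemma ncard_neighborSet_inl (a : A) :
    ((bipSemiDoubleB R).neighborSet (.inl a)).ncard = 2 * {b | R a b}.ncard := by
  have : (bipSemiDoubleB R).neighborSet (.inl a) = .inr '' (Sum.elim id id ⁻¹' {b | R a b}) := by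
    ext (a' | c) <;> simp
  rw [this, ncard_image_of_injective _ Sum.inr_injective, preimage_sumElim, preimage_id, two_mul]
  exact ncard_sumEquiv_symm_apply _

def bicoloring : (bipSemiDoubleB R).Coloring Bool :=
  Coloring.mk Sum.isLeft <| by rintro (a | c) (a' | c') h <;> simp_all

lemma edist_inl_inl_le_two {a a' : A} {b : B} (h : R a b) (h' : R a' b) :
    (bipSemiDoubleB R).edist (.inl a) (.inl a') ≤ 2 :=
  calc (bipSemiDoubleB R).edist (.inl a) (.inl a')
      ≤ (bipSemiDoubleB R).edist (.inl a) (.inr (.inl b)) +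
        (bipSemiDoubleB R).edist (.inr (.inl b)) (.inl a') := SimpleGraph.edist_triangle
    _ = 2 := by
      rw [edist_eq_one_iff_adj.2 (adj_inl_inr.2 h), edist_eq_one_iff_adj.2 (adj_inr_inl.2 h')]
      rfl

lemma edist_inr_inr_le_two {c c' : B ⊕ B} {a : A} (h : R a (c.elim id id))
    (h' : R a (c'.elim id id)) : (bipSemiDoubleB R).edist (.inr c) (.inr c') ≤ 2 :=
  calc (bipSemiDoubleB R).edist (.inr c) (.inr c')
      ≤ (bipSemiDoubleB R).edist (.inr c) (.inl a) +
        (bipSemiDoubleB R).edist (.inl a) (.inr c') := SimpleGraph.edist_triangle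
    _ = 2 := by
      rw [edist_eq_one_iff_adj.2 (adj_inr_inl.2 h), edist_eq_one_iff_adj.2 (adj_inl_inr.2 h')]
      rfl

lemma edist_inl_inr_le_three {a : A} {c : B ⊕ B} (hA : ∀ a a', ∃ b, R a b ∧ R a' b)
    (hB : ∀ b, ∃ a, R a b) : (bipSemiDoubleB R).edist (.inl a) (.inr c) ≤ 3 := by
  obtain ⟨a', ha'⟩ := hB (c.elim id id)
  obtain ⟨b, hab, ha'b⟩ := hA a a'
  calc (bipSemiDoubleB R).edist (.inl a) (.inr c)
      ≤ (bipSemiDoubleB R).edist (.inl a) (.inl a') +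
        (bipSemiDoubleB R).edist (.inl a') (.inr c) := SimpleGraph.edist_triangle
    _ ≤ 2 + 1 := by
      gcongr
      · exact edist_inl_inl_le_two hab ha'b
      · exact (edist_eq_one_iff_adj.2 (adj_inl_inr.2 ha')).le
    _ = 3 := rfl

lemma ediam_le_three (hA : ∀ a a', ∃ b, R a b ∧ R a' b) (hB : ∀ b b', ∃ a, R a b ∧ R a b') :
    (bipSemiDoubleB R).ediam ≤ 3 := by
  have hB' (b : B) : ∃ a, R a b := (hB b b).imp fun _ ↦ And.left
  refine ediam_le_of_edist_le ?_
  rintro (a | c) (a' | c')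
  · obtain ⟨b, h, h'⟩ := hA a a'
    exact (edist_inl_inl_le_two h h').trans (by norm_num)
  · exact edist_inl_inr_le_three hA hB'
  · rw [SimpleGraph.edist_comm]
    exact edist_inl_inr_le_three hA hB'
  · obtain ⟨a, h, h'⟩ := hB (c.elim id id) (c'.elim id id)
    exact (edist_inr_inr_le_two h h').trans (by norm_num)

lemma three_le_edist_inl_inr {a : A} {c : B ⊕ B} (h : ¬ R a (c.elim id id)) :
    3 ≤ (bipSemiDoubleB R).edist (.inl a) (.inr c) := by
  by_cases htop : (bipSemiDoubleB R).edist (.inl a) (.inr c) = ⊤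
  · simp [htop]
  obtain ⟨w, hw⟩ := exists_walk_of_edist_ne_top htop
  obtain ⟨k, hk⟩ : Odd w.length :=
    (bicoloring.odd_length_iff_not_congr w).2 (by simp [bicoloring, Coloring.mk])
  have hne : w.length ≠ 1 := fun h1 ↦ h (adj_inl_inr.1 (w.adj_of_length_eq_one h1))
  rw [← hw]
  exact_mod_cast (by omega : 3 ≤ w.length)

end bipSemiDoubleB

namespace Configuration.ProjectivePlane

variable {P L : Type*} [Membership P L] [ProjectivePlane P L]

theorem exists_point_mem (l : L) : ∃ p : P, p ∈ l := by
  obtain ⟨-, p₂, -, -, l₂, -, -, -, -, h₂₂, -⟩ := @exists_config P L _ _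
  by_cases hl : l = l₂
  · exact ⟨p₂, hl ▸ h₂₂⟩
  · exact ⟨HasPoints.mkPoint hl, (HasPoints.mkPoint_ax hl).1⟩

theorem exists_point_mem_mem (l m : L) : ∃ p : P, p ∈ l ∧ p ∈ m := by
  by_cases h : l = m
  · obtain ⟨p, hp⟩ := exists_point_mem (P := P) l
    exact ⟨p, hp, h ▸ hp⟩
  · exact ⟨HasPoints.mkPoint h, HasPoints.mkPoint_ax h⟩

theorem exists_line_mem_mem (p p' : P) : ∃ l : L, p ∈ l ∧ p' ∈ l :=
  exists_point_mem_mem (P := Dual L) (L := Dual P) p p'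

variable (P L) in
theorem ediam_bipSemiDoubleB : (bipSemiDoubleB (fun (p : P) (l : L) ↦ p ∈ l)).ediam = 3 := by
  obtain ⟨p₁, -, -, -, l₂, -, h₁₂, -⟩ := @exists_config P L _ _
  refine le_antisymm (bipSemiDoubleB.ediam_le_three exists_line_mem_mem exists_point_mem_mem) ?_
  exact (bipSemiDoubleB.three_le_edist_inl_inr (c := .inl l₂) h₁₂).trans edist_le_ediam

end Configuration.ProjectivePlane

/-- Let `G` be the incidence graph of a projective plane of order
`q = r−1`.  Then the semi-double graph `G^{2V2}` (duplicating the line part) is a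
bipartite biregular graph with degrees `r` and `2r`, order `3r² − 3r + 3`,
and diameter `3`. -/
theorem stmt_14 (P L : Type*) [Fintype P] [Fintype L] [Membership P L]
    [Configuration.ProjectivePlane P L] (r : ℕ)
    (hr : Configuration.ProjectivePlane.order P L + 1 = r) :
    (∀ b : L ⊕ L, ((bipSemiDoubleB (fun (p : P) (l : L) => p ∈ l)).neighborSet
        (Sum.inr b)).ncard = r) ∧
      (∀ p : P, ((bipSemiDoubleB (fun (p : P) (l : L) => p ∈ l)).neighborSet
        (Sum.inl p)).ncard = 2 * r) ∧
      Fintype.card (P ⊕ (L ⊕ L)) = 3 * r ^ 2 - 3 * r + 3 ∧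
      (bipSemiDoubleB (fun (p : P) (l : L) => p ∈ l)).diam = 3 := by
  subst hr
  refine ⟨fun c ↦ ?_, fun p ↦ ?_, ?_, ?_⟩
  · rw [bipSemiDoubleB.ncard_neighborSet_inr, ← Nat.card_coe_set_eq]
    exact ProjectivePlane.pointCount_eq P (c.elim id id)
  · rw [bipSemiDoubleB.ncard_neighborSet_inl, ← Nat.card_coe_set_eq]
    exact congrArg (2 * ·) (ProjectivePlane.lineCount_eq L p)
  · simp only [Fintype.card_sum, ProjectivePlane.card_points P L, ProjectivePlane.card_lines P L]
    generalize ProjectivePlane.order P L = q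
    have : 3 * (q + 1) ^ 2 = 3 * (q + 1) + 3 * (q ^ 2 + q) := by ring
    omega
  · rw [diam, ProjectivePlane.ediam_bipSemiDoubleB]
    rfl
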